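/- Let d ≥ 1, v > 0, let m : ℝ^d → ℝ^d be measurable, and let π be a probability density on ℝ^d. Define the marginal density p(x) = ∫ π(x₀) k(x; m(x₀), v) dx₀ and fix x ∈ ℝ^d with p(x) > 0. Then p is differentiable at x, its gradient is ∇p(x) = ∫ π(x₀) · ((m(x₀) − x)/v) · k(x; m(x₀), v) dx₀, and consequently the score of the marginal is the posterior average of the conditional score: ∇ log p(x) = ∫ (π(x₀) k(x; m(x₀), v) / p(x)) · ((m(x₀) − x)/v) dx₀, where (m(x₀) − x)/v = ∇_x log k(x; m(x₀), v). -/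

import Mathlib

open MeasureTheory

noncomputable section

/-- The Gaussian kernel `k(x; m, v) = (2πv)^{-d/2} exp(-‖x − m‖²/(2v))` on `ℝ^d`. -/
def gaussK (d : ℕ) (v : ℝ) (m x : EuclideanSpace ℝ (Fin d)) : ℝ :=
  (2 * Real.pi * v) ^ (-(d : ℝ) / 2) * Real.exp (-‖x - m‖ ^ 2 / (2 * v))

/-! The kernel has `x`-gradient `k(x; m, v) · (m − x)/v`, and since `t e^{-t²/(2v)} ≤ 2v + 1`
this gradient is bounded by `(2πv)^{-d/2} (2v + 1)/v` uniformly in `x` and `m`. Hence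
`|π(x₀)| (2πv)^{-d/2} (2v + 1)/v` is an integrable dominating function and `p` may be
differentiated under the integral sign; the score formula is the chain rule for `log ∘ p`. -/

open InnerProductSpace

section Gradient

variable {E : Type*} [NormedAddCommGroup E] [InnerProductSpace ℝ E] [CompleteSpace E]

theorem HasDerivAt.comp_hasGradientAt {h : ℝ → ℝ} {h' : ℝ} {f : E → ℝ} {g x : E}
    (hh : HasDerivAt h h' (f x)) (hf : HasGradientAt f g x) :
    HasGradientAt (fun y => h (f y)) (h' • g) x := by
  rw [hasGradientAt_iff_hasFDerivAt, map_smul]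
  exact hh.comp_hasFDerivAt x hf

theorem hasGradientAt_norm_sub_sq (w x : E) :
    HasGradientAt (fun y => ‖y - w‖ ^ 2) ((2 : ℝ) • (x - w)) x := by
  refine ((hasFDerivAt_id x).sub_const w).norm_sq.congr_fderiv ?_
  ext z
  simp

theorem hasGradientAt_integral_of_dominated_of_gradient_le {α : Type*} [MeasurableSpace α]
    {μ : Measure α} {F : E → α → ℝ} {F' : E → α → E} {x₀ : E} {s : Set E}
    {bound : α → ℝ} (hs : s ∈ nhds x₀)
    (hF_meas : ∀ᶠ x in nhds x₀, AEStronglyMeasurable (F x) μ)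
    (hF_int : Integrable (F x₀) μ) (hF'_meas : AEStronglyMeasurable (F' x₀) μ)
    (h_bound : ∀ᵐ a ∂μ, ∀ x ∈ s, ‖F' x a‖ ≤ bound a)
    (bound_integrable : Integrable bound μ)
    (h_diff : ∀ᵐ a ∂μ, ∀ x ∈ s, HasGradientAt (F · a) (F' x a) x) :
    HasGradientAt (fun x => ∫ a, F x a ∂μ) (∫ a, F' x₀ a ∂μ) x₀ := by
  have h_bound' : ∀ᵐ a ∂μ, ∀ x ∈ s, ‖toDual ℝ E (F' x a)‖ ≤ bound a := by
    simpa only [LinearIsometryEquiv.norm_map] using h_bound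
  have h_fderiv := hasFDerivAt_integral_of_dominated_of_fderiv_le hs hF_meas hF_int
    ((toDual ℝ E).continuous.comp_aestronglyMeasurable hF'_meas) h_bound' bound_integrable h_diff
  have h_comm : ∫ a, toDual ℝ E (F' x₀ a) ∂μ = toDual ℝ E (∫ a, F' x₀ a ∂μ) :=
    (toDual ℝ E).toLinearIsometry.integral_comp_comm _
  rwa [h_comm] at h_fderiv

theorem hasGradientAt_neg_norm_sub_sq_div (v : ℝ) (w x : E) :
    HasGradientAt (fun y => -‖y - w‖ ^ 2 / (2 * v)) (v⁻¹ • (w - x)) x := by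
  have hq : HasDerivAt (fun t : ℝ => -t / (2 * v)) (-1 / (2 * v)) (‖x - w‖ ^ 2) :=
    (hasDerivAt_id' _).neg.div_const _
  convert hq.comp_hasGradientAt (f := fun y => ‖y - w‖ ^ 2) (hasGradientAt_norm_sub_sq w x)
    using 1
  rw [smul_smul, ← neg_smul_neg, neg_sub]
  congr 1
  ring

end Gradient

theorem mul_exp_neg_sq_div_le {v : ℝ} (hv : 0 < v) (t : ℝ) :
    t * Real.exp (-t ^ 2 / (2 * v)) ≤ 2 * v + 1 := by
  have hs : t ^ 2 / (2 * v) * (2 * v) = t ^ 2 := div_mul_cancel₀ _ (by positivity)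
  have hexp : t ≤ (2 * v + 1) * Real.exp (t ^ 2 / (2 * v)) := calc
    t ≤ (2 * v + 1) * (t ^ 2 / (2 * v) + 1) := by
      nlinarith [sq_nonneg (t - 1), div_nonneg (sq_nonneg t) (by positivity : (0 : ℝ) ≤ 2 * v)]
    _ ≤ (2 * v + 1) * Real.exp (t ^ 2 / (2 * v)) := by
      gcongr
      linarith [Real.add_one_le_exp (t ^ 2 / (2 * v))]
  rwa [neg_div, Real.exp_neg, ← div_eq_mul_inv, div_le_iff₀ (Real.exp_pos _)]

section Gaussian

variable {d : ℕ} {v : ℝ}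

theorem gaussK_pos (hv : 0 < v) (w x : EuclideanSpace ℝ (Fin d)) : 0 < gaussK d v w x := by
  unfold gaussK
  positivity

theorem gaussK_le (hv : 0 ≤ v) (w x : EuclideanSpace ℝ (Fin d)) :
    gaussK d v w x ≤ (2 * Real.pi * v) ^ (-(d : ℝ) / 2) := by
  refine mul_le_of_le_one_right (by positivity) (Real.exp_le_one_iff.2 ?_)
  exact div_nonpos_of_nonpos_of_nonneg (neg_nonpos.2 (by positivity)) (by positivity)

theorem continuous_gaussK_center (x : EuclideanSpace ℝ (Fin d)) :
    Continuous fun w => gaussK d v w x := by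
  unfold gaussK
  fun_prop

theorem hasGradientAt_gaussK (w x : EuclideanSpace ℝ (Fin d)) :
    HasGradientAt (gaussK d v w) (gaussK d v w x • v⁻¹ • (w - x)) x :=
  ((Real.hasDerivAt_exp _).const_mul _).comp_hasGradientAt
    (hasGradientAt_neg_norm_sub_sq_div v w x)

theorem hasGradientAt_log_gaussK (hv : 0 < v) (w x : EuclideanSpace ℝ (Fin d)) :
    HasGradientAt (fun y => Real.log (gaussK d v w y)) (v⁻¹ • (w - x)) x := by
  have h := (Real.hasDerivAt_log (gaussK_pos hv w x).ne').comp_hasGradientAt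
    (hasGradientAt_gaussK w x)
  rwa [smul_smul, inv_mul_cancel₀ (gaussK_pos hv w x).ne', one_smul] at h

theorem norm_gaussK_smul_le (hv : 0 < v) (w x : EuclideanSpace ℝ (Fin d)) :
    ‖gaussK d v w x • v⁻¹ • (w - x)‖
      ≤ (2 * Real.pi * v) ^ (-(d : ℝ) / 2) * (2 * v + 1) / v := by
  calc ‖gaussK d v w x • v⁻¹ • (w - x)‖
      = (2 * Real.pi * v) ^ (-(d : ℝ) / 2)
          * (‖x - w‖ * Real.exp (-‖x - w‖ ^ 2 / (2 * v))) / v := by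
        rw [norm_smul, norm_smul, Real.norm_of_nonneg (gaussK_pos hv w x).le, norm_inv,
          Real.norm_of_nonneg hv.le, norm_sub_rev, gaussK]
        ring
    _ ≤ (2 * Real.pi * v) ^ (-(d : ℝ) / 2) * (2 * v + 1) / v := by
        gcongr
        exact mul_exp_neg_sq_div_le hv _

end Gaussian

open Set Filter in
theorem hasGradientAt_integral_mul_gaussK {α : Type*} [MeasurableSpace α] {μ : Measure α}
    {d : ℕ} {v : ℝ} (hv : 0 < v) {π : α → ℝ} (hπ : Integrable π μ)
    {m : α → EuclideanSpace ℝ (Fin d)} (hm : AEMeasurable m μ)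
    (x : EuclideanSpace ℝ (Fin d)) :
    HasGradientAt (fun y => ∫ a, π a * gaussK d v (m a) y ∂μ)
      (∫ a, (π a * gaussK d v (m a) x) • (v⁻¹ • (m a - x)) ∂μ) x := by
  set C := (2 * Real.pi * v) ^ (-(d : ℝ) / 2)
  have hK_meas (y : EuclideanSpace ℝ (Fin d)) :
      AEStronglyMeasurable (fun a => gaussK d v (m a) y) μ :=
    ((continuous_gaussK_center y).measurable.comp_aemeasurable hm).aestronglyMeasurable
  have hK_le (a : α) : ‖gaussK d v (m a) x‖ ≤ C := by
    rw [Real.norm_of_nonneg (gaussK_pos hv _ _).le]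
    exact gaussK_le hv.le _ _
  have hF'_meas :
      AEStronglyMeasurable (fun a => (π a * gaussK d v (m a) x) • (v⁻¹ • (m a - x))) μ :=
    (hπ.1.mul (hK_meas x)).smul
      ((hm.aestronglyMeasurable.sub aestronglyMeasurable_const).const_smul v⁻¹)
  have hF'_le (a : α) (y : EuclideanSpace ℝ (Fin d)) :
      ‖(π a * gaussK d v (m a) y) • (v⁻¹ • (m a - y))‖
        ≤ ‖π a‖ * (C * (2 * v + 1) / v) := by
    rw [mul_smul, norm_smul]
    gcongr
    exact norm_gaussK_smul_le hv _ _
  have hF_grad (a : α) (y : EuclideanSpace ℝ (Fin d)) :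
      HasGradientAt (fun y => π a * gaussK d v (m a) y)
        ((π a * gaussK d v (m a) y) • (v⁻¹ • (m a - y))) y := by
    have h := ((hasDerivAt_id' _).const_mul (π a)).comp_hasGradientAt
      (hasGradientAt_gaussK (v := v) (m a) y)
    rwa [mul_one, ← mul_smul] at h
  exact hasGradientAt_integral_of_dominated_of_gradient_le univ_mem
    (Eventually.of_forall fun y => hπ.1.mul (hK_meas y))
    (hπ.mul_bdd (hK_meas x) (ae_of_all _ hK_le)) hF'_meas
    (ae_of_all _ fun a y _ => hF'_le a y) (hπ.norm.mul_const _)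
    (ae_of_all _ fun a y _ => hF_grad a y)

theorem score_of_gaussian_marginal_general
    (d : ℕ) (v : ℝ) (hv : 0 < v)
    (m : EuclideanSpace ℝ (Fin d) → EuclideanSpace ℝ (Fin d)) (hm : Measurable m)
    (π : EuclideanSpace ℝ (Fin d) → ℝ)
    (hπ_int : ∫ x₀, π x₀ = 1)
    (p : EuclideanSpace ℝ (Fin d) → ℝ)
    (hp : ∀ x', p x' = ∫ x₀, π x₀ * gaussK d v (m x₀) x')
    (x : EuclideanSpace ℝ (Fin d)) (hp_pos : 0 < p x) :
    DifferentiableAt ℝ p x ∧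
      gradient p x = ∫ x₀, (π x₀ * gaussK d v (m x₀) x) • (v⁻¹ • (m x₀ - x)) ∧
      gradient (fun x' => Real.log (p x')) x
        = ∫ x₀, ((π x₀ * gaussK d v (m x₀) x) / p x) • (v⁻¹ • (m x₀ - x)) ∧
      ∀ x₀, gradient (fun x' => Real.log (gaussK d v (m x₀) x')) x
        = v⁻¹ • (m x₀ - x) := by
  have hπ : Integrable π := .of_integral_ne_zero (by rw [hπ_int]; exact one_ne_zero)
  have hp_grad :
      HasGradientAt p (∫ x₀, (π x₀ * gaussK d v (m x₀) x) • (v⁻¹ • (m x₀ - x))) x := by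
    rw [funext hp]
    exact hasGradientAt_integral_mul_gaussK hv hπ hm.aemeasurable x
  have hlog_grad := (Real.hasDerivAt_log hp_pos.ne').comp_hasGradientAt hp_grad
  refine ⟨hp_grad.differentiableAt, hp_grad.gradient, ?_,
    fun x₀ => (hasGradientAt_log_gaussK hv (m x₀) x).gradient⟩
  rw [hlog_grad.gradient, ← integral_smul]
  congr 1 with x₀
  rw [smul_smul, div_eq_inv_mul]

/-- **The score of a Gaussian-smoothed marginal is the posterior average of the conditional
score.** For `p(x) = ∫ π(x₀) k(x; m(x₀), v) dx₀` with `p(x) > 0`, the density `p` is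
differentiable at `x`, `∇p(x) = ∫ π(x₀) ((m(x₀) − x)/v) k(x; m(x₀), v) dx₀`, and
`∇ log p(x) = ∫ (π(x₀) k(x; m(x₀), v)/p(x)) ((m(x₀) − x)/v) dx₀`, where
`(m(x₀) − x)/v = ∇ₓ log k(x; m(x₀), v)`. -/
theorem score_of_gaussian_marginal
    (d : ℕ) (hd : 1 ≤ d) (v : ℝ) (hv : 0 < v)
    (m : EuclideanSpace ℝ (Fin d) → EuclideanSpace ℝ (Fin d)) (hm : Measurable m)
    (π : EuclideanSpace ℝ (Fin d) → ℝ)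
    (hπ_meas : Measurable π) (hπ_nonneg : ∀ x₀, 0 ≤ π x₀)
    (hπ_int : ∫ x₀, π x₀ = 1)
    (p : EuclideanSpace ℝ (Fin d) → ℝ)
    (hp : ∀ x', p x' = ∫ x₀, π x₀ * gaussK d v (m x₀) x')
    (x : EuclideanSpace ℝ (Fin d)) (hp_pos : 0 < p x) :
    DifferentiableAt ℝ p x ∧
      gradient p x = ∫ x₀, (π x₀ * gaussK d v (m x₀) x) • (v⁻¹ • (m x₀ - x)) ∧
      gradient (fun x' => Real.log (p x')) x
        = ∫ x₀, ((π x₀ * gaussK d v (m x₀) x) / p x) • (v⁻¹ • (m x₀ - x)) ∧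
      ∀ x₀, gradient (fun x' => Real.log (gaussK d v (m x₀) x')) x
        = v⁻¹ • (m x₀ - x) :=
  score_of_gaussian_marginal_general d v hv m hm π hπ_int p hp x hp_pos
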